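/- The point spectrum of U(s,r,s) on bv_p is empty for 1 < p < ∞ when s ≠ 0: the equation U(s,r,s)x = λx has no nonzero solution x ∈ bv_p for any λ ∈ ℂ. -/

import Mathlib

/-!
With `t = (λ - r) / s` the eigen-equation is the recurrence `x (k+1) = t x k - x (k-1)`,
`x (-1) = 0`, and the differences `d = Δx` satisfy the same recurrence with `d 1 = (t - 1) d 0`.
Factor `z² - t z + 1 = (z - α) (z - β)` with `‖α‖ ≥ 1`; then
`d (k+1) - β d k = α ^ k (α - 1) x 0`, while `d → 0` since `d ∈ ℓ^p` with `p < ∞`.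
If `α ≠ 1` this forces `x 0 = 0`; if `α = 1` then `β = 1` and `d` is the constant `x 0`.
Once `x 0 = 0`, the recurrence gives `x = 0`.
-/
open scoped ENNReal
open Real Set

/-- The tridiagonal operator U(s,r,s) acting on sequences, with x_{-1} = 0. -/
noncomputable def Ufun (s r : ℂ) (x : ℕ → ℂ) : ℕ → ℂ :=
  fun k => (if k = 0 then 0 else s * x (k - 1)) + r * x k + s * x (k + 1)

/-- The backward difference (Δ x)_k = x_k − x_{k−1}, with x_{-1} = 0. -/
noncomputable def dL (x : ℕ → ℂ) : ℕ → ℂ :=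
  fun k => x k - (if k = 0 then 0 else x (k - 1))

open Filter Topology

theorem Memℓp.tendsto_cofinite_zero {ι E : Type*} [NormedAddCommGroup E] {p : ℝ≥0∞}
    {f : ι → E} (hf : Memℓp f p) (hp : p ≠ ∞) : Tendsto f cofinite (𝓝 0) := by
  rcases eq_or_ne p 0 with rfl | hp₀
  · refine tendsto_nhds_of_eventually_eq (eventually_cofinite.mpr ?_)
    exact memℓp_zero_iff.mp hf
  · have hp' : 0 < p.toReal := ENNReal.toReal_pos hp₀ hp
    have h := ((hf.summable hp').tendsto_cofinite_zero).rpow_const (p := p.toReal⁻¹)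
      (Or.inr (inv_nonneg.mpr hp'.le))
    rw [Real.zero_rpow (inv_ne_zero hp'.ne')] at h
    refine tendsto_zero_iff_norm_tendsto_zero.mpr (h.congr fun i => ?_)
    rw [← Real.rpow_mul (norm_nonneg _), mul_inv_cancel₀ hp'.ne', Real.rpow_one]

theorem Complex.exists_add_eq_and_mul_eq_one_and_one_le_norm (t : ℂ) :
    ∃ α β : ℂ, α + β = t ∧ α * β = 1 ∧ 1 ≤ ‖α‖ := by
  obtain ⟨δ, hδ⟩ := IsAlgClosed.exists_pow_nat_eq (t ^ 2 - 4) two_pos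
  have hsum : (t + δ) / 2 + (t - δ) / 2 = t := by ring
  have hprod : (t + δ) / 2 * ((t - δ) / 2) = 1 := by linear_combination (-1 / 4 : ℂ) * hδ
  by_cases h : 1 ≤ ‖(t + δ) / 2‖
  · exact ⟨_, _, hsum, hprod, h⟩
  · refine ⟨_, _, (add_comm _ _).trans hsum, (mul_comm _ _).trans hprod, ?_⟩
    have := congrArg norm hprod
    rw [norm_mul, norm_one] at this
    nlinarith [norm_nonneg ((t + δ) / 2), norm_nonneg ((t - δ) / 2)]

theorem eq_zero_of_tendsto_pow_mul {𝕜 : Type*} [NormedDivisionRing 𝕜] {α c : 𝕜}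
    (hα : 1 ≤ ‖α‖) (h : Tendsto (fun k : ℕ => α ^ k * c) atTop (𝓝 0)) : c = 0 := by
  refine norm_le_zero_iff.mp (ge_of_tendsto' (tendsto_zero_iff_norm_tendsto_zero.mp h) ?_)
  intro k
  rw [norm_mul, norm_pow]
  exact le_mul_of_one_le_left (norm_nonneg c) (one_le_pow₀ hα)

theorem sub_mul_eq_pow_mul_of_recurrence {R : Type*} [CommRing R] {α β : R} {d : ℕ → R}
    (hrec : ∀ k, d (k + 2) = (α + β) * d (k + 1) - α * β * d k) (k : ℕ) :
    d (k + 1) - β * d k = α ^ k * (d 1 - β * d 0) := by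
  induction k with
  | zero => ring
  | succ k ih => rw [hrec, pow_succ]; linear_combination α * ih

theorem apply_zero_eq_zero_of_tendsto_zero_of_recurrence {𝕜 : Type*} [NormedField 𝕜]
    {α β : 𝕜} (hαβ : α * β = 1) (hα : 1 ≤ ‖α‖) {d : ℕ → 𝕜}
    (hrec : ∀ k, d (k + 2) = (α + β) * d (k + 1) - d k) (h₁ : d 1 = (α + β - 1) * d 0)
    (hd : Tendsto d atTop (𝓝 0)) : d 0 = 0 := by
  have key (k : ℕ) : d (k + 1) - β * d k = α ^ k * ((α - 1) * d 0) := by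
    rw [sub_mul_eq_pow_mul_of_recurrence (fun k => by rw [hαβ, one_mul]; exact hrec k), h₁]
    ring
  by_cases hα₁ : α = 1
  · obtain rfl : β = 1 := by simpa [hα₁] using hαβ
    have hconst (k : ℕ) : d k = d 0 := by
      induction k with
      | zero => rfl
      | succ k ih => simpa [hα₁, ih, sub_eq_zero] using key k
    exact tendsto_nhds_unique (tendsto_const_nhds.congr fun k => (hconst k).symm) hd
  · have hlim : Tendsto (fun k => d (k + 1) - β * d k) atTop (𝓝 0) := by
      simpa using (hd.comp (tendsto_add_atTop_nat 1)).sub (hd.const_mul β)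
    have := eq_zero_of_tendsto_pow_mul hα (hlim.congr key)
    exact (mul_eq_zero.mp this).resolve_left (sub_ne_zero.mpr hα₁)

theorem eq_zero_of_recurrence {R : Type*} [CommRing R] {t : R} {x : ℕ → R}
    (h₁ : x 1 = t * x 0) (hrec : ∀ k, x (k + 2) = t * x (k + 1) - x k) (h₀ : x 0 = 0) :
    x = 0 := by
  have h (k : ℕ) : x k = 0 ∧ x (k + 1) = 0 := by
    induction k with
    | zero => exact ⟨h₀, by rw [h₁, h₀, mul_zero]⟩
    | succ k ih => exact ⟨ih.2, by rw [hrec, ih.1, ih.2]; ring⟩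
  exact funext fun k => (h k).1

section Eigenvector

variable {s r lam : ℂ} {x : ℕ → ℂ}

theorem Ufun_eigen_one (hs : s ≠ 0) (heig : ∀ k, Ufun s r x k = lam * x k) :
    x 1 = (lam - r) / s * x 0 := by
  have := heig 0
  simp only [Ufun, if_pos, zero_add] at this
  field_simp
  linear_combination this

theorem Ufun_eigen_add_two (hs : s ≠ 0) (heig : ∀ k, Ufun s r x k = lam * x k) (k : ℕ) :
    x (k + 2) = (lam - r) / s * x (k + 1) - x k := by
  have := heig (k + 1)
  simp only [Ufun, Nat.add_sub_cancel, if_neg (Nat.succ_ne_zero k)] at this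
  field_simp
  linear_combination this

end Eigenvector

theorem dL_one {x : ℕ → ℂ} {t : ℂ} (h₁ : x 1 = t * x 0) : dL x 1 = (t - 1) * dL x 0 := by
  simp only [dL, if_pos, if_neg one_ne_zero, Nat.sub_self, sub_zero, h₁]
  ring

theorem dL_add_two {x : ℕ → ℂ} {t : ℂ} (h₁ : x 1 = t * x 0)
    (hrec : ∀ k, x (k + 2) = t * x (k + 1) - x k) (k : ℕ) :
    dL x (k + 2) = t * dL x (k + 1) - dL x k := by
  rcases k with _ | k
  · simp only [dL, if_pos, if_neg (Nat.succ_ne_zero _), hrec, h₁]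
    ring
  · show x (k + 3) - x (k + 2) = t * (x (k + 2) - x (k + 1)) - (x (k + 1) - x k)
    rw [hrec (k + 1), hrec k]
    ring

theorem stmt17_general (s r : ℂ) (hs : s ≠ 0) (p : ℝ≥0∞) (hp' : p ≠ ∞)
    (lam : ℂ) (x : ℕ → ℂ) (hx : Memℓp (dL x) p)
    (heig : ∀ k, Ufun s r x k = lam * x k) : x = 0 := by
  set t := (lam - r) / s
  have h₁ : x 1 = t * x 0 := Ufun_eigen_one hs heig
  have hrec : ∀ k, x (k + 2) = t * x (k + 1) - x k := Ufun_eigen_add_two hs heig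
  obtain ⟨α, β, hαβt, hαβ, hα⟩ := Complex.exists_add_eq_and_mul_eq_one_and_one_le_norm t
  have hd : Tendsto (dL x) atTop (𝓝 0) := by
    simpa [Nat.cofinite_eq_atTop] using hx.tendsto_cofinite_zero hp'
  have h₀ : dL x 0 = 0 := by
    refine apply_zero_eq_zero_of_tendsto_zero_of_recurrence hαβ hα (d := dL x) ?_ ?_ hd
    · simpa only [hαβt] using dL_add_two h₁ hrec
    · rw [hαβt]; exact dL_one h₁
  exact eq_zero_of_recurrence h₁ hrec (by simpa [dL] using h₀)

/-- The point spectrum of U(s,r,s) on bv_p is empty: U x = λ x has no nonzero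
solution x ∈ bv_p. -/
theorem stmt17 (s r : ℂ) (hs : s ≠ 0) (p : ℝ≥0∞) (hp : 1 < p) (hp' : p ≠ ∞)
    (lam : ℂ) (x : ℕ → ℂ) (hx : Memℓp (dL x) p)
    (heig : ∀ k, Ufun s r x k = lam * x k) : x = 0 :=
  stmt17_general s r hs p hp' lam x hx heig
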